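/- Backward induction bound for the cost-to-go difference: Let a, b be reals with 0 < a ≤ b, and let G : ℕ → ℝ satisfy G(N) = 0 and, for n < N, G(n) ≤ G(n+1) + ab / (b + G(n+1)), with G(n+1) ≥ 0. Then for all n ≤ N, G(n) ≤ √(2ab(N - n)). -/
import Mathlib


theorem cost_to_go_backward_induction (N : ℕ) (a b : ℝ)
    (ha : 0 < a) (hab : a ≤ b)
    (G : ℕ → ℝ)
    (hGN : G N = 0)
    (hGnonneg : ∀ n, n ≤ N → 0 ≤ G n)
    (hrec : ∀ n, n < N → G n ≤ G (n + 1) + a * b / (b + G (n + 1))) :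
    ∀ n, n ≤ N → G n ≤ Real.sqrt (2 * a * b * ((N - n : ℕ) : ℝ)) := by
  have hb : 0 < b := lt_of_lt_of_le ha hab
  have key : ∀ k : ℕ, ∀ n, n ≤ N → N - n = k → G n ≤ Real.sqrt (2 * a * b * k) := by
    intro k
    induction k with
    | zero =>
      intro n hn hk
      have : n = N := by omega
      subst this
      simp [hGN, Real.sqrt_nonneg]
    | succ k ih =>
      intro n hn hk
      have hnN : n < N := by omega
      have h1 : G (n + 1) ≤ Real.sqrt (2 * a * b * k) := ih (n + 1) (by omega) (by omega)
      set s := Real.sqrt (2 * a * b * k) with hs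
      set t := Real.sqrt (2 * a * b * (k + 1 : ℕ)) with ht
      have hsnn : 0 ≤ s := Real.sqrt_nonneg _
      have htnn : 0 ≤ t := Real.sqrt_nonneg _
      have hs2 : s ^ 2 = 2 * a * b * k := by
        rw [hs, Real.sq_sqrt]; positivity
      have ht2 : t ^ 2 = 2 * a * b * k + 2 * a * b := by
        rw [ht, Real.sq_sqrt]
        · push_cast; ring
        · positivity
      have hx := hGnonneg (n + 1) (by omega)
      set x := G (n + 1) with hxdef
      have hbx : 0 < b + x := by linarith
      have hbs : 0 < b + s := by linarith
      have hts : s ≤ t := by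
        rw [hs, ht]
        apply Real.sqrt_le_sqrt
        push_cast
        nlinarith
      -- monotonicity: x + ab/(b+x) ≤ s + ab/(b+s)
      have hmono : x + a * b / (b + x) ≤ s + a * b / (b + s) := by
        have hd : a * b / (b + x) - a * b / (b + s) ≤ s - x := by
          rw [div_sub_div _ _ (ne_of_gt hbx) (ne_of_gt hbs), div_le_iff₀ (by positivity)]
          nlinarith [mul_nonneg (sub_nonneg.mpr h1)
            (show (0:ℝ) ≤ (b + x) * (b + s) - a * b by
              nlinarith [mul_nonneg hx hsnn, mul_nonneg hx hb.le, mul_nonneg hsnn hb.le])]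
        linarith
      -- s + ab/(b+s) ≤ t
      have hstep : s + a * b / (b + s) ≤ t := by
        have h2bst : t ≤ 2 * b + s := by
          nlinarith [sq_nonneg (2 * b + s - t), mul_nonneg htnn hsnn, mul_nonneg htnn hb.le]
        have hdiv : a * b / (b + s) ≤ t - s := by
          rw [div_le_iff₀ hbs]
          nlinarith [mul_nonneg (sub_nonneg.mpr hts) (sub_nonneg.mpr h2bst)]
        linarith
      calc G n ≤ x + a * b / (b + x) := hrec n hnN
        _ ≤ s + a * b / (b + s) := hmono
        _ ≤ t := hstep
  intro n hn
  exact key (N - n) n hn rfl
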